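/- Let F₁ and F₂ be forests of rooted binary X-trees T₁ and T₂. Suppose F₁ is the disjoint union of trees Ṫ₁, …, Ṫ_k and F₂ is the disjoint union of forests Ḟ₁, …, Ḟ_k such that Ṫ_i and Ḟ_i have the same label set for each i. Then a forest of F₂ is an agreement forest of T₁ and T₂ if and only if it is an agreement forest of F₁ and F₂. -/

import Mathlib

namespace Phylo

/-- Rooted binary phylogenetic tree with leaves labelled by `X`. -/
inductive PT (X : Type) where
  | leaf : X → PT X
  | node : PT X → PT X → PT X
deriving DecidableEq

variable {X : Type} [DecidableEq X]

/-- The multiset of leaf labels of a tree. -/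
def labels : PT X → Multiset X
  | .leaf x => {x}
  | .node l r => labels l + labels r

/-- The finite set of leaf labels of a tree. -/
def labs : PT X → Finset X
  | .leaf x => {x}
  | .node l r => labs l ∪ labs r

/-- The multiset of leaf labels of a forest. -/
def labelsF (F : Multiset (PT X)) : Multiset X := (F.map labels).sum

/-- `Sub u t`: `u` occurs as a rooted subtree (i.e. a node) of `t`. -/
inductive Sub : PT X → PT X → Prop
  | refl (t : PT X) : Sub t t
  | left {u l r : PT X} : Sub u l → Sub u (PT.node l r)
  | right {u l r : PT X} : Sub u r → Sub u (PT.node l r)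

/-- Boolean version of `Sub`. -/
def subB : PT X → PT X → Bool
  | u, .leaf x => decide (u = .leaf x)
  | u, .node l r => decide (u = .node l r) || subB u l || subB u r

/-- The finite set of all rooted subtrees (nodes) of a tree. -/
def subtrees : PT X → Finset (PT X)
  | .leaf x => {.leaf x}
  | .node l r => insert (.node l r) (subtrees l ∪ subtrees r)

/-- A node of a forest, identified with the subtree below it. -/
def NodeOf (F : Multiset (PT X)) (u : PT X) : Prop := ∃ C ∈ F, Sub u C

/-- Cut the edges above the subtrees in `E`, suppressing unlabelled nodes with
fewer than two children.  Returns the component containing the root (if any)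
together with the multiset of detached components. -/
def cutAll (E : Finset (PT X)) : PT X → Option (PT X) × Multiset (PT X)
  | .leaf x => (some (.leaf x), 0)
  | .node l r =>
    let pl := cutAll E l
    let pr := cutAll E r
    let lk : Option (PT X) := if l ∈ E then none else pl.1
    let lM : Multiset (PT X) :=
      if l ∈ E then pl.2 + (↑pl.1.toList : Multiset (PT X)) else pl.2
    let rk : Option (PT X) := if r ∈ E then none else pr.1
    let rM : Multiset (PT X) :=
      if r ∈ E then pr.2 + (↑pr.1.toList : Multiset (PT X)) else pr.2
    (match lk, rk with
      | some a, some b => some (.node a b)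
      | some a, none => some a
      | none, some b => some b
      | none, none => none,
     lM + rM)

/-- `F ÷ E`: the forest yielded by deleting the edges in `E` from the forest
`F` (an edge is identified by the subtree hanging below it) and suppressing
unlabelled nodes with fewer than two children. -/
def divF (F : Multiset (PT X)) (E : Finset (PT X)) : Multiset (PT X) :=
  (F.map (fun t => (↑(cutAll E t).1.toList : Multiset (PT X)) + (cutAll E t).2)).sum

/-- `F` is a forest of the forest `G`. -/
def ForestOf (F G : Multiset (PT X)) : Prop := ∃ E : Finset (PT X), divF G E = F

/-- `F` is an agreement forest of the trees `T₁` and `T₂`. -/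
def IsAF (F : Multiset (PT X)) (T₁ T₂ : PT X) : Prop :=
  ForestOf F {T₁} ∧ ForestOf F {T₂}

/-- The minimum number of edges that must be cut in `F` to obtain an
agreement forest of `T₁` and `T₂`. -/
noncomputable def ecut (T₁ T₂ : PT X) (F : Multiset (PT X)) : ℕ :=
  sInf {n | ∃ E : Finset (PT X), E.card = n ∧ IsAF (divF F E) T₁ T₂}

/-- The number of components of a maximum agreement forest. -/
noncomputable def maf (T₁ T₂ : PT X) : ℕ :=
  sInf {n | ∃ F : Multiset (PT X), IsAF F T₁ T₂ ∧ Multiset.card F = n}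

/-- `u` is the smallest subtree of `t` containing all labels in `S`
(the LCA of `S` in `t`). -/
def IsLCA (t : PT X) (S : Finset X) (u : PT X) : Prop :=
  Sub u t ∧ S ⊆ labs u ∧ ∀ v, Sub v u → S ⊆ labs v → v = u

/-- In `t`, the LCA of `S₁` is an ancestor of the LCA of `S₂`. -/
def Anc (t : PT X) (S₁ S₂ : Finset X) : Prop :=
  ∃ u v, IsLCA t S₁ u ∧ IsLCA t S₂ v ∧ Sub v u

/-- In `t`, the LCA of `S₁` is a proper ancestor of the LCA of `S₂`. -/
def PAnc (t : PT X) (S₁ S₂ : Finset X) : Prop :=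
  ∃ u v, IsLCA t S₁ u ∧ IsLCA t S₂ v ∧ Sub v u ∧ v ≠ u

/-- Edge of the cycle graph of an agreement forest of `T₁` and `T₂`:
the root of component `C` maps to an ancestor of the root of `C'`
in `T₁` or in `T₂`. -/
def CEdge (T₁ T₂ : PT X) (C C' : PT X) : Prop :=
  C ≠ C' ∧ (Anc T₁ (labs C) (labs C') ∨ Anc T₂ (labs C) (labs C'))

/-- The cycle graph of `F` (w.r.t. `T₁`, `T₂`) contains a directed cycle. -/
def HasCycle (T₁ T₂ : PT X) (F : Multiset (PT X)) : Prop :=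
  ∃ (C : PT X) (l : List (PT X)), C ∈ F ∧ (∀ D ∈ l, D ∈ F) ∧
    List.Chain (CEdge T₁ T₂) C (l ++ [C])

/-- `F` is an acyclic agreement forest of `T₁` and `T₂`. -/
def IsAAF (F : Multiset (PT X)) (T₁ T₂ : PT X) : Prop :=
  IsAF F T₁ T₂ ∧ ¬ HasCycle T₁ T₂ F

/-- The minimum number of edges that must be cut in `F` to obtain an
acyclic agreement forest of `T₁` and `T₂`. -/
noncomputable def aecut (T₁ T₂ : PT X) (F : Multiset (PT X)) : ℕ :=
  sInf {n | ∃ E : Finset (PT X), E.card = n ∧ IsAAF (divF F E) T₁ T₂}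

/-- The number of components of a maximum acyclic agreement forest. -/
noncomputable def maaf (T₁ T₂ : PT X) : ℕ :=
  sInf {n | ∃ F : Multiset (PT X), IsAAF F T₁ T₂ ∧ Multiset.card F = n}

/-- `a` and `c` are siblings in some component of `F`. -/
def SiblingIn (F : Multiset (PT X)) (a c : PT X) : Prop :=
  ∃ C ∈ F, Sub (PT.node a c) C ∨ Sub (PT.node c a) C

/-- `(a,c)` is a sibling pair of `F₁`: `a` and `c` have a common parent in
`F₁` and both exist in `F₂`. -/
def SiblingPair (F₁ F₂ : Multiset (PT X)) (a c : PT X) : Prop :=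
  SiblingIn F₁ a c ∧ (∃ C ∈ F₂, Sub a C) ∧ (∃ C ∈ F₂, Sub c C)

/-- The nodes `a` and `c` lie in the same component of `F`. -/
def SameComp (F : Multiset (PT X)) (a c : PT X) : Prop :=
  ∃ C ∈ F, Sub a C ∧ Sub c C

/-- The leaves labelled `a` and `b` lie in the same component of `F`. -/
def SameCompLabel (F : Multiset (PT X)) (a b : X) : Prop :=
  ∃ C ∈ F, a ∈ labs C ∧ b ∈ labs C

/-- `ab|c` is a triple of the forest `F`. -/
def IsTriple (F : Multiset (PT X)) (a b c : X) : Prop :=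
  ∃ C ∈ F, ∃ u, Sub u C ∧ a ∈ labs u ∧ b ∈ labs u ∧ c ∈ labs C ∧ c ∉ labs u

/-- `UpChain x m bs`: walking up from node `x` to node `m`, the siblings
encountered (the pendant nodes of the path) are `bs`, in order. -/
inductive UpChain : PT X → PT X → List (PT X) → Prop
  | nil (x : PT X) : UpChain x x []
  | consL {x m b : PT X} {bs : List (PT X)} :
      UpChain (PT.node x b) m bs → UpChain x m (b :: bs)
  | consR {x m b : PT X} {bs : List (PT X)} :
      UpChain (PT.node b x) m bs → UpChain x m (b :: bs)

/-- `CutEdge T R s`: cutting one edge of `T` (and suppressing the resulting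
degree-two node) leaves the tree `R` and detaches the subtree `s`. -/
inductive CutEdge : PT X → PT X → PT X → Prop
  | cutL (l r : PT X) : CutEdge (.node l r) r l
  | cutR (l r : PT X) : CutEdge (.node l r) l r
  | inL {l l' s : PT X} (r : PT X) : CutEdge l l' s → CutEdge (.node l r) (.node l' r) s
  | inR {r r' s : PT X} (l : PT X) : CutEdge r r' s → CutEdge (.node l r) (.node l r') s

/-- `Graft s R T'`: `T'` is obtained from `R` by subdividing an edge of `R`
(or adding a new root) and attaching `s` below the new node. -/
inductive Graft (s : PT X) : PT X → PT X → Prop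
  | here (t : PT X) : Graft s t (.node s t)
  | here' (t : PT X) : Graft s t (.node t s)
  | inL {l l' : PT X} (r : PT X) : Graft s l l' → Graft s (.node l r) (.node l' r)
  | inR {r r' : PT X} (l : PT X) : Graft s r r' → Graft s (.node l r) (.node l r')

/-- A single subtree prune-and-regraft operation. -/
def SprStep (T T' : PT X) : Prop := ∃ R s, CutEdge T R s ∧ Graft s R T'

/-- `n` SPR operations transform the first tree into the second. -/
def SprN : ℕ → PT X → PT X → Prop
  | 0 => fun T T' => T = T'
  | n + 1 => fun T T'' => ∃ T', SprStep T T' ∧ SprN n T' T''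

/-- The SPR distance. -/
noncomputable def dspr (T₁ T₂ : PT X) : ℕ := sInf {n | SprN n T₁ T₂}

/-- The edges on the path from node `v` to the root of the component `C`
(each edge identified by the subtree below it). -/
def pathEdges (C v : PT X) : Finset (PT X) :=
  (subtrees C).filter (fun s => subB v s ∧ s ≠ C)

/-- `HybEdge T ρ F u C`: the expanded cycle graph of `F` has a `T`-hybrid edge
from the node `u` of `F` to the root of the component `C ≠ C_ρ` of `F`;
`u` is the lowest node of `F` whose image in `T` is a proper ancestor of the
image of the root of `C`. -/
def HybEdge (T : PT X) (ρ : X) (F : Multiset (PT X)) (u C : PT X) : Prop :=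
  C ∈ F ∧ ρ ∉ labs C ∧ NodeOf F u ∧ PAnc T (labs u) (labs C) ∧
    ∀ u', NodeOf F u' → PAnc T (labs u') (labs C) → Anc T (labs u') (labs u)

/-- Edge of the expanded cycle graph `ecyc(F)`: either a tree edge of `F`
(directed away from the root) or a hybrid edge. -/
def EcycEdge (T₁ T₂ : PT X) (ρ : X) (F : Multiset (PT X)) (u v : PT X) : Prop :=
  (NodeOf F u ∧ ∃ l r, u = PT.node l r ∧ (v = l ∨ v = r))
  ∨ HybEdge T₁ ρ F u v ∨ HybEdge T₂ ρ F u v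

/-- The expanded cycle graph of `F` contains a directed cycle. -/
def HasCycleE (T₁ T₂ : PT X) (ρ : X) (F : Multiset (PT X)) : Prop :=
  ∃ (u : PT X) (l : List (PT X)), NodeOf F u ∧ (∀ w ∈ l, NodeOf F w) ∧
    List.Chain (EcycEdge T₁ T₂ ρ F) u (l ++ [u])

/-- The set of potential exit nodes of `F`: tails of hybrid edges of
`ecyc(F)`. -/
def pen (T₁ T₂ : PT X) (ρ : X) (F : Multiset (PT X)) : Set (PT X) :=
  {u | ∃ C, HybEdge T₁ ρ F u C ∨ HybEdge T₂ ρ F u C}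

/-- The edge above `s` lies on the path from node `a` up to node `m`. -/
def OnPathUp (a m s : PT X) : Prop := Sub a s ∧ Sub s m ∧ s ≠ m

/-- `a` and `b` are connected in `F − E` (deleting the edges in `E`,
without suppression). -/
def ConnAvoiding (F : Multiset (PT X)) (E : Finset (PT X)) (a b : PT X) : Prop :=
  ∃ C ∈ F, ∃ m, Sub m C ∧ Sub a m ∧ Sub b m ∧
    ∀ s ∈ E, ¬ OnPathUp a m s ∧ ¬ OnPathUp b m s

/-- `v` is an endpoint of the edge above `s` in `F`. -/
def IsEndpoint (F : Multiset (PT X)) (s v : PT X) : Prop :=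
  v = s ∨ (NodeOf F v ∧ ∃ w, v = PT.node s w ∨ v = PT.node w s)

/-- Components `C` and `C'` (of some forest) overlap in the forest `F₁`. -/
def Overlap (F₁ : Multiset (PT X)) (C C' : PT X) : Prop :=
  ∃ a b c d : X, a ∈ labs C ∧ b ∈ labs C ∧ c ∈ labs C' ∧ d ∈ labs C' ∧
    ∃ D ∈ F₁, a ∈ labs D ∧ b ∈ labs D ∧ c ∈ labs D ∧ d ∈ labs D ∧
      ∃ s, Sub s D ∧ s ≠ D ∧
        Xor' (a ∈ labs s) (b ∈ labs s) ∧ Xor' (c ∈ labs s) (d ∈ labs s)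

end Phylo

/-!
For trees with distinct labels, a forest of a forest is obtained by cutting each component
separately (`IsCut`), and cutting a tree is the same as cutting single edges one after the
other (`CutEdge`). Transitivity of "is a forest of" follows, which gives one direction.

For the other, follow a sequence of single-edge cuts from `T₁` to `F₁` while keeping `G` a
forest of the current forest. When a component `C` falls apart into `R` and `s`, each piece
of `G` coming from `C` has its labels in `R` or in `s`, because `G` refines `F₂` and hence
`F₁`. A cut of `C` all of whose pieces lie on one side of the edge is a cut of `R` together
with a cut of `s`: a piece meeting both sides would have to use the edge above `s`.
-/

namespace Phylo

variable {X : Type}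

@[simp] lemma labels_leaf (x : X) : labels (PT.leaf x) = {x} := rfl

@[simp] lemma labels_node (l r : PT X) : labels (.node l r) = labels l + labels r := rfl

lemma labels_ne_zero : ∀ t : PT X, labels t ≠ 0
  | .leaf _ => by simp
  | .node l _ => by simp [labels_ne_zero l]

lemma exists_mem_labels (t : PT X) : ∃ x, x ∈ labels t :=
  Multiset.exists_mem_of_ne_zero (labels_ne_zero t)

lemma labels_le_labelsF {g : PT X} {F : Multiset (PT X)} (hg : g ∈ F) :
    labels g ≤ labelsF F :=
  Multiset.le_sum_of_mem (Multiset.mem_map_of_mem labels hg)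

@[simp] lemma labelsF_add (F G : Multiset (PT X)) :
    labelsF (F + G) = labelsF F + labelsF G := by
  simp [labelsF]

@[simp] lemma labelsF_cons (t : PT X) (F : Multiset (PT X)) :
    labelsF (t ::ₘ F) = labels t + labelsF F := by
  simp [labelsF]

@[simp] lemma labelsF_singleton (t : PT X) : labelsF {t} = labels t := by
  simp [labelsF]

lemma Sub.labels_le {s t : PT X} (h : Sub s t) : labels s ≤ labels t := by
  induction h with
  | refl => exact le_rfl
  | left _ ih => exact ih.trans (by simp)
  | right _ ih => exact ih.trans (by simp)

lemma Sub.node_of_child {s l r : PT X} (h : Sub s l ∨ Sub s r) :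
    Sub s (.node l r) ∧ s ≠ .node l r := by
  rcases h with h | h
  · exact ⟨.left h, fun he => labels_ne_zero r (by simpa [he] using h.labels_le)⟩
  · exact ⟨.right h, fun he => labels_ne_zero l (by simpa [he] using h.labels_le)⟩

lemma labels_not_subset_of_disjoint {A B : Multiset X} (hd : Disjoint A B) {s : PT X}
    (hA : labels s ⊆ A) : ¬ labels s ⊆ B := fun hB => by
  obtain ⟨x, hx⟩ := exists_mem_labels s
  exact Multiset.disjoint_left.1 hd (hA hx) (hB hx)

/-- Lets one argument cover a node and its mirror image. -/
def nodeAt : Bool → PT X → PT X → PT X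
  | false, c, o => .node c o
  | true, c, o => .node o c

@[simp] lemma nodeAt_false (c o : PT X) : nodeAt false c o = .node c o := rfl

@[simp] lemma nodeAt_true (c o : PT X) : nodeAt true c o = .node o c := rfl

@[simp] lemma labels_nodeAt (σ : Bool) (c o : PT X) :
    labels (nodeAt σ c o) = labels c + labels o := by
  cases σ <;> simp [add_comm]

lemma cutEdge_nodeAt (σ : Bool) (c o : PT X) : CutEdge (nodeAt σ c o) o c := by
  cases σ
  · exact .cutL c o
  · exact .cutR o c

lemma CutEdge.nodeAt_congr {c c' s : PT X} (h : CutEdge c c' s) (σ : Bool) (o : PT X) :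
    CutEdge (nodeAt σ c o) (nodeAt σ c' o) s := by
  cases σ
  · exact .inL o h
  · exact .inR o h

lemma CutEdge.labels_add {t R s : PT X} (h : CutEdge t R s) :
    labels R + labels s = labels t := by
  induction h with
  | cutL l r => exact add_comm _ _
  | cutR l r => rfl
  | inL r _ ih => simp [← ih, add_right_comm]
  | inR l _ ih => simp [← ih, add_assoc]

/-- A cut of a tree: the component containing the root, or `none` when the edges to both
children of the root were cut, together with the detached components. -/
abbrev Split (X : Type) := Option (PT X) × Multiset (PT X)

namespace Split

def parts (q : Split X) : Multiset (PT X) := q.1.toList + q.2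

def sever (b : Bool) (q : Split X) : Split X := if b then (none, q.parts) else q

def joinAt (σ : Bool) (u v : Split X) : Split X := (Option.merge (nodeAt σ) u.1 v.1, u.2 + v.2)

def detach (M : Multiset (PT X)) (q : Split X) : Split X := (q.1, q.2 + M)

@[simp] lemma parts_some (a : PT X) (M : Multiset (PT X)) : parts (some a, M) = a ::ₘ M := rfl

@[simp] lemma parts_none (M : Multiset (PT X)) : parts (none, M) = M := by simp [parts]

@[simp] lemma sever_false (q : Split X) : q.sever false = q := rfl

@[simp] lemma sever_true (q : Split X) : q.sever true = (none, q.parts) := rfl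

@[simp] lemma parts_sever (b : Bool) (q : Split X) : (q.sever b).parts = q.parts := by
  cases b <;> simp

lemma snd_le_sever_snd (b : Bool) (q : Split X) : q.2 ≤ (q.sever b).2 := by
  cases b <;> simp [parts]

lemma sever_fst_eq_some {b : Bool} {q : Split X} {a : PT X} :
    (q.sever b).1 = some a ↔ b = false ∧ q.1 = some a := by
  cases b <;> simp

lemma parts_joinAt_of_none {σ : Bool} {u v : Split X} (h : u.1 = none ∨ v.1 = none) :
    (joinAt σ u v).parts = u.parts + v.parts := by
  obtain ⟨o, M⟩ := u
  obtain ⟨o', M'⟩ := v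
  rcases h with rfl | rfl
  · cases o' <;> simp [joinAt, parts, add_left_comm]
  · cases o <;> simp [joinAt, parts]

lemma joinAt_true (u v : Split X) : joinAt true u v = joinAt false v u := by
  obtain ⟨o, M⟩ := u
  obtain ⟨o', M'⟩ := v
  cases o <;> cases o' <;> simp [joinAt, nodeAt, add_comm]

@[simp] lemma labelsF_parts_joinAt (σ : Bool) (u v : Split X) :
    labelsF (joinAt σ u v).parts = labelsF u.parts + labelsF v.parts := by
  obtain ⟨o, M⟩ := u
  obtain ⟨o', M'⟩ := v
  cases o <;> cases o' <;> simp [joinAt, parts] <;> abel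

@[simp] lemma parts_detach (M : Multiset (PT X)) (q : Split X) :
    (q.detach M).parts = q.parts + M := by
  simp [detach, parts, add_assoc]

lemma sever_detach (b : Bool) (M : Multiset (PT X)) (q : Split X) :
    (q.detach M).sever b = (q.sever b).detach M := by
  cases b <;> simp [detach, parts, add_assoc]

lemma joinAt_detach (σ : Bool) (M : Multiset (PT X)) (u v : Split X) :
    (u.detach M).joinAt σ v = (u.joinAt σ v).detach M := by
  simp [detach, joinAt, add_right_comm]

lemma joinAt_none_left (σ : Bool) (M : Multiset (PT X)) (v : Split X) :
    joinAt σ (none, M) v = v.detach M := by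
  obtain ⟨_ | a, N⟩ := v <;> simp [joinAt, detach, add_comm]

end Split

open Split

/-- In `node`, `b` and `b'` record whether the edges above `l` and `r` are deleted. -/
inductive IsCut : PT X → Split X → Prop
  | leaf (x : X) : IsCut (.leaf x) (some (.leaf x), 0)
  | node {l r : PT X} {p p' : Split X} (b b' : Bool) :
      IsCut l p → IsCut r p' → IsCut (.node l r) ((p.sever b).joinAt false (p'.sever b'))

lemma isCut_nodeAt {σ : Bool} {c o : PT X} {p p' : Split X} (b b' : Bool) (hc : IsCut c p)
    (ho : IsCut o p') : IsCut (nodeAt σ c o) ((p.sever b).joinAt σ (p'.sever b')) := by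
  cases σ
  · exact .node b b' hc ho
  · rw [joinAt_true]
    exact .node b' b ho hc

lemma IsCut.of_nodeAt {σ : Bool} {c o : PT X} {q : Split X} (h : IsCut (nodeAt σ c o) q) :
    ∃ p p' b b', IsCut c p ∧ IsCut o p' ∧ q = (p.sever b).joinAt σ (p'.sever b') := by
  cases σ
  · cases h with
    | node b b' hc ho => exact ⟨_, _, b, b', hc, ho, rfl⟩
  · cases h with
    | node b b' ho hc => exact ⟨_, _, b', b, hc, ho, joinAt_true _ _ ▸ rfl⟩

lemma IsCut.self : ∀ t : PT X, IsCut t (some t, 0)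
  | .leaf x => .leaf x
  | .node l r => by simpa [joinAt] using IsCut.node false false (.self l) (.self r)

lemma IsCut.labelsF_parts {t : PT X} {q : Split X} (h : IsCut t q) :
    labelsF q.parts = labels t := by
  induction h with
  | leaf x => simp
  | node b b' _ _ ihl ihr => simp [ihl, ihr]

lemma IsCut.labels_le {t : PT X} {q : Split X} (h : IsCut t q) {g : PT X} (hg : g ∈ q.parts) :
    labels g ≤ labels t :=
  h.labelsF_parts ▸ labels_le_labelsF hg

lemma IsCut.labels_subset {t : PT X} {q : Split X} (h : IsCut t q) {g : PT X} (hg : g ∈ q.2) :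
    labels g ⊆ labels t :=
  Multiset.subset_of_le (h.labels_le (by simp [parts, hg]))

lemma IsCut.labels_root_subset {t : PT X} {q : Split X} (h : IsCut t q) {a : PT X}
    (ha : q.1 = some a) : labels a ⊆ labels t :=
  Multiset.subset_of_le (h.labels_le (by simp [parts, ha]))

lemma CutEdge.isCut_detach {t R s : PT X} (h : CutEdge t R s) {p qs : Split X}
    (hR : IsCut R p) (hs : IsCut s qs) : IsCut t (p.detach qs.parts) := by
  induction h generalizing p with
  | cutL l r => simpa [joinAt_none_left] using isCut_nodeAt (σ := false) true false hs hR
  | cutR l r => simpa [joinAt_none_left] using isCut_nodeAt (σ := true) true false hs hR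
  | inL r h ih =>
    obtain ⟨p₁, p₂, b, b', h₁, h₂, rfl⟩ := hR.of_nodeAt (σ := false)
    simpa [sever_detach, joinAt_detach] using isCut_nodeAt (σ := false) b b' (ih h₁ hs) h₂
  | inR l h ih =>
    obtain ⟨p₁, p₂, b, b', h₁, h₂, rfl⟩ := hR.of_nodeAt (σ := true)
    simpa [sever_detach, joinAt_detach] using isCut_nodeAt (σ := true) b b' (ih h₁ hs) h₂

section DecidableEq

variable [DecidableEq X]

lemma cutAll_node (E : Finset (PT X)) (l r : PT X) :
    cutAll E (.node l r) =
      joinAt false (sever (l ∈ E) (cutAll E l)) (sever (r ∈ E) (cutAll E r)) := by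
  simp only [cutAll]
  generalize cutAll E l = p, cutAll E r = p'
  obtain ⟨_ | a, M⟩ := p <;> obtain ⟨_ | a', M'⟩ := p' <;> by_cases hl : l ∈ E <;>
    by_cases hr : r ∈ E <;> simp [joinAt, parts, hl, hr, add_comm]

lemma isCut_cutAll (E : Finset (PT X)) : ∀ t : PT X, IsCut t (cutAll E t)
  | .leaf x => .leaf x
  | .node l r => cutAll_node E l r ▸ .node _ _ (isCut_cutAll E l) (isCut_cutAll E r)

lemma cutAll_congr {E E' : Finset (PT X)} {t : PT X}
    (h : ∀ s, Sub s t → s ≠ t → (s ∈ E ↔ s ∈ E')) : cutAll E t = cutAll E' t := by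
  induction t with
  | leaf x => rfl
  | node l r ihl ihr =>
    have hl (s) (hs : Sub s l) := (Sub.node_of_child (.inl hs)).elim (h s)
    have hr (s) (hs : Sub s r) := (Sub.node_of_child (.inr hs)).elim (h s)
    rw [cutAll_node, cutAll_node, ihl (fun s hs _ => hl s hs), ihr (fun s hs _ => hr s hs)]
    simp only [hl l (.refl l), hr r (.refl r)]

lemma IsCut.exists_cutAll_eq {t : PT X} {q : Split X} (hnd : (labels t).Nodup)
    (h : IsCut t q) :
    ∃ E : Finset (PT X), (∀ s ∈ E, Sub s t ∧ s ≠ t) ∧ cutAll E t = q := by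
  induction h with
  | leaf x => exact ⟨∅, by simp, rfl⟩
  | @node l r p p' b b' _ _ ihl ihr =>
    obtain ⟨hndl, hndr, hd⟩ := Multiset.nodup_add.1 hnd
    obtain ⟨El, hEl, rfl⟩ := ihl hndl
    obtain ⟨Er, hEr, rfl⟩ := ihr hndr
    have hne {s s'} (hs : Sub s l) (hs' : Sub s' r) : s ≠ s' := by
      rintro rfl
      exact labels_not_subset_of_disjoint hd (Multiset.subset_of_le hs.labels_le)
        (Multiset.subset_of_le hs'.labels_le)
    set E := El ∪ Er ∪ (if b then {l} else ∅) ∪ (if b' then {r} else ∅)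
    have memE_l {s} (hs : Sub s l) : s ∈ E ↔ s ∈ El ∨ (b ∧ s = l) := by
      have h₁ : s ∉ Er := fun h => hne hs (hEr s h).1 rfl
      have h₂ : s ≠ r := hne hs (.refl r)
      cases b <;> cases b' <;> simp [E, h₁, h₂, or_comm]
    have memE_r {s} (hs : Sub s r) : s ∈ E ↔ s ∈ Er ∨ (b' ∧ s = r) := by
      have h₁ : s ∉ El := fun h => hne (hEl s h).1 hs rfl
      have h₂ : s ≠ l := fun h => hne (.refl l) hs h.symm
      cases b <;> cases b' <;> simp [E, h₁, h₂, or_comm]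
    refine ⟨E, fun s hs => Sub.node_of_child ?_, ?_⟩
    · simp only [E, Finset.mem_union] at hs
      rcases hs with ((h | h) | h) | h
      · exact .inl (hEl s h).1
      · exact .inr (hEr s h).1
      · cases b <;> simp at h
        exact .inl (h ▸ .refl l)
      · cases b' <;> simp at h
        exact .inr (h ▸ .refl r)
    · have hl : cutAll E l = cutAll El l :=
        cutAll_congr fun s hs hsl => by simp [memE_l hs, hsl]
      have hr : cutAll E r = cutAll Er r :=
        cutAll_congr fun s hs hsr => by simp [memE_r hs, hsr]
      have hlE : l ∈ E ↔ b := by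
        simpa [show l ∉ El from fun h => (hEl l h).2 rfl] using memE_l (.refl l)
      have hrE : r ∈ E ↔ b' := by
        simpa [show r ∉ Er from fun h => (hEr r h).2 rfl] using memE_r (.refl r)
      rw [cutAll_node, hl, hr]
      simp only [hlE, hrE, Bool.decide_eq_true]

lemma divF_cons (t : PT X) (F : Multiset (PT X)) (E : Finset (PT X)) :
    divF (t ::ₘ F) E = parts (cutAll E t) + divF F E := by
  simp [divF, parts]

lemma divF_congr {F : Multiset (PT X)} {E E' : Finset (PT X)}
    (h : ∀ D ∈ F, cutAll E D = cutAll E' D) : divF F E = divF F E' := by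
  simp only [divF]
  rw [Multiset.map_congr rfl fun D hD => by rw [h D hD]]

end DecidableEq

def CutsInto (t : PT X) (G : Multiset (PT X)) : Prop := ∃ q, IsCut t q ∧ q.parts = G

def CutsTo (F G : Multiset (PT X)) : Prop :=
  ∃ Gs : Multiset (Multiset (PT X)), Multiset.Rel CutsInto F Gs ∧ G = Gs.sum

lemma cutsTo_singleton {t : PT X} {G : Multiset (PT X)} : CutsTo {t} G ↔ CutsInto t G := by
  constructor
  · rintro ⟨Gs, hrel, rfl⟩
    obtain ⟨g, Gs', hg, h0, rfl⟩ := Multiset.rel_cons_left.1 hrel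
    rw [Multiset.rel_zero_left.1 h0]
    simpa using hg
  · exact fun h => ⟨{G}, .cons h .zero, by simp⟩

def Refines (G F : Multiset (PT X)) : Prop := ∀ g ∈ G, ∃ D ∈ F, labels g ⊆ labels D

lemma Refines.trans {F G H : Multiset (PT X)} (h : Refines G F) (h' : Refines F H) :
    Refines G H := fun g hg => by
  obtain ⟨D, hD, hgD⟩ := h g hg
  obtain ⟨D', hD', hDD'⟩ := h' D hD
  exact ⟨D', hD', Multiset.Subset.trans hgD hDD'⟩

lemma CutsTo.refines {F G : Multiset (PT X)} (h : CutsTo F G) : Refines G F := fun g hg => by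
  obtain ⟨Gs, hrel, rfl⟩ := h
  obtain ⟨gs, hgs, hg⟩ := Multiset.mem_join.1 hg
  obtain ⟨D, hD, q, hq, rfl⟩ := Multiset.exists_mem_of_rel_of_mem (Multiset.rel_flip.2 hrel) hgs
  exact ⟨D, hD, Multiset.subset_of_le (hq.labels_le hg)⟩

section DecidableEq

variable [DecidableEq X]

lemma ForestOf.cutsTo {F G : Multiset (PT X)} (h : ForestOf G F) : CutsTo F G := by
  obtain ⟨E, rfl⟩ := h
  exact ⟨F.map fun t => parts (cutAll E t), Multiset.rel_map_right.2
    (Multiset.rel_refl_of_refl_on fun t _ => ⟨_, isCut_cutAll E t, rfl⟩), rfl⟩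

lemma CutsTo.forestOf {F G : Multiset (PT X)} (hnd : (labelsF F).Nodup) (h : CutsTo F G) :
    ForestOf G F := by
  obtain ⟨Gs, hrel, rfl⟩ := h
  -- the label bound keeps the edges chosen for different components apart
  suffices ∃ E : Finset (PT X), (∀ s ∈ E, labels s ≤ labelsF F) ∧ divF F E = Gs.sum from
    this.imp fun _ => And.right
  induction hrel with
  | zero => exact ⟨∅, by simp, rfl⟩
  | @cons t g F Gs hg _ ih =>
    obtain ⟨hndt, hndF, hd⟩ := Multiset.nodup_add.1 (labelsF_cons t F ▸ hnd)
    obtain ⟨q, hq, rfl⟩ := hg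
    obtain ⟨Et, hEt, hcut⟩ := hq.exists_cutAll_eq hndt
    obtain ⟨EF, hEF, hdiv⟩ := ih hndF
    refine ⟨Et ∪ EF, fun s hs => ?_, ?_⟩
    · rcases Finset.mem_union.1 hs with hs | hs
      · exact (hEt s hs).1.labels_le.trans (by simp)
      · exact (hEF s hs).trans (by simp)
    · have ht : cutAll (Et ∪ EF) t = q := hcut ▸ cutAll_congr fun s hs _ =>
        ⟨fun h => (Finset.mem_union.1 h).resolve_right fun h' =>
          labels_not_subset_of_disjoint hd (Multiset.subset_of_le hs.labels_le)
            (Multiset.subset_of_le (hEF s h')), Finset.mem_union_left _⟩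
      have hF : divF F (Et ∪ EF) = divF F EF := divF_congr fun D hD => cutAll_congr fun s hs _ =>
        ⟨fun h => (Finset.mem_union.1 h).resolve_left fun h' => labels_not_subset_of_disjoint hd
          (Multiset.subset_of_le (hEt s h').1.labels_le)
          (Multiset.subset_of_le (hs.labels_le.trans (labels_le_labelsF hD))),
          Finset.mem_union_right _⟩
      rw [divF_cons, ht, hF, hdiv, Multiset.sum_cons]

end DecidableEq

def CutStep (F F' : Multiset (PT X)) : Prop :=
  ∃ C R s rest, CutEdge C R s ∧ F = C ::ₘ rest ∧ F' = R ::ₘ s ::ₘ rest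

abbrev CutSteps : Multiset (PT X) → Multiset (PT X) → Prop := Relation.ReflTransGen CutStep

lemma CutStep.add_right {F F' : Multiset (PT X)} (h : CutStep F F') (H : Multiset (PT X)) :
    CutStep (F + H) (F' + H) := by
  obtain ⟨C, R, s, rest, hce, rfl, rfl⟩ := h
  exact ⟨C, R, s, rest + H, hce, by simp, by simp⟩

lemma CutSteps.add_right {F F' : Multiset (PT X)} (h : CutSteps F F') (H : Multiset (PT X)) :
    CutSteps (F + H) (F' + H) :=
  Relation.ReflTransGen.lift (· + H) (fun _ _ hs => CutStep.add_right hs H) _ _ h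

lemma CutSteps.add {F F' H H' : Multiset (PT X)} (h : CutSteps F F') (h' : CutSteps H H') :
    CutSteps (F + H) (F' + H') :=
  (h.add_right H).trans (by simpa only [add_comm F'] using h'.add_right F')

lemma CutStep.single {t R s : PT X} (h : CutEdge t R s) : CutStep {t} {R, s} :=
  ⟨t, R, s, 0, h, rfl, rfl⟩

lemma CutStep.labelsF_eq {F F' : Multiset (PT X)} (h : CutStep F F') : labelsF F' = labelsF F := by
  obtain ⟨C, R, s, rest, hce, rfl, rfl⟩ := h
  simp [← hce.labels_add, add_assoc]

inductive Prune : PT X → PT X → Multiset (PT X) → Prop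
  | refl (t : PT X) : Prune t t 0
  | cut {t t' s a : PT X} {M : Multiset (PT X)} :
      CutEdge t t' s → Prune t' a M → Prune t a (s ::ₘ M)

lemma Prune.trans {t b c : PT X} {M N : Multiset (PT X)} (h : Prune t b M) (h' : Prune b c N) :
    Prune t c (M + N) := by
  induction h with
  | refl => simpa using h'
  | cut hce _ ih => simpa using Prune.cut hce (ih h')

lemma Prune.nodeAt_congr {c a : PT X} {M : Multiset (PT X)} (h : Prune c a M) (σ : Bool)
    (o : PT X) : Prune (nodeAt σ c o) (nodeAt σ a o) M := by
  induction h with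
  | refl => exact .refl _
  | cut hce _ ih => exact .cut (hce.nodeAt_congr σ o) ih

lemma Prune.cutSteps {t a : PT X} {M : Multiset (PT X)} (h : Prune t a M) :
    CutSteps {t} (a ::ₘ M) := by
  induction h with
  | refl => exact .refl
  | @cut t t' s a M hce _ ih =>
    have := ih.add_right {s}
    rw [Multiset.singleton_add, Multiset.cons_add, add_comm M, Multiset.singleton_add] at this
    exact .head (CutStep.single hce) this

/-- The root component of `q` is pruned out of `t`; if there is none, `t` disappears
completely, which makes sense only below a parent node, whose other child `z` remains. -/
def Reduces (t : PT X) (q : Split X) : Prop :=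
  (∀ a, q.1 = some a → Prune t a q.2) ∧ (q.1 = none → ∀ σ z, Prune (nodeAt σ t z) z q.2)

lemma Reduces.sever {t : PT X} {q : Split X} (h : Reduces t q) (b : Bool) :
    Reduces t (q.sever b) := by
  cases b
  · exact h
  refine ⟨by simp, fun _ σ z => ?_⟩
  obtain ⟨_ | a, M⟩ := q
  · simpa using h.2 rfl σ z
  · have := ((h.1 a rfl).nodeAt_congr σ z).trans (.cut (cutEdge_nodeAt σ a z) (.refl z))
    rwa [Multiset.add_cons, add_zero] at this

lemma Reduces.join {l r : PT X} {u v : Split X} (hu : Reduces l u) (hv : Reduces r v) :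
    Reduces (.node l r) (u.joinAt false v) := by
  obtain ⟨_ | a, M⟩ := u <;> obtain ⟨_ | a', M'⟩ := v
  · exact ⟨by simp [Split.joinAt], fun _ σ z =>
      ((hu.2 rfl false r).nodeAt_congr σ z).trans (hv.2 rfl σ z)⟩
  · refine ⟨fun a h => ?_, by simp [Split.joinAt]⟩
    obtain rfl : a' = a := by simpa [Split.joinAt] using h
    exact (hu.2 rfl false r).trans (hv.1 a' rfl)
  · refine ⟨fun a₀ h => ?_, by simp [Split.joinAt]⟩
    obtain rfl : a = a₀ := by simpa [Split.joinAt] using h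
    exact ((hu.1 a rfl).nodeAt_congr false r).trans (hv.2 rfl true a)
  · refine ⟨fun a₀ h => ?_, by simp [Split.joinAt]⟩
    obtain rfl : PT.node a a' = a₀ := by simpa [Split.joinAt] using h
    exact ((hu.1 a rfl).nodeAt_congr false r).trans ((hv.1 a' rfl).nodeAt_congr true a)

lemma IsCut.reduces {t : PT X} {q : Split X} (h : IsCut t q) : Reduces t q := by
  induction h with
  | leaf x => exact ⟨fun a h => by cases h; exact .refl _, by simp⟩
  | node b b' _ _ ihl ihr => exact (ihl.sever b).join (ihr.sever b')

lemma IsCut.cutSteps {t : PT X} {q : Split X} (h : IsCut t q) : CutSteps {t} q.parts := by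
  induction h with
  | leaf x => exact .refl
  | @node l r p p' b b' hl hr ihl ihr =>
    cases hq : ((p.sever b).joinAt false (p'.sever b')).1 with
    | some a => simpa [parts, hq] using ((IsCut.node b b' hl hr).reduces.1 a hq).cutSteps
    | none =>
      have hnone : (p.sever b).1 = none ∨ (p'.sever b').1 = none := by
        simp [Split.joinAt] at hq
        exact .inl hq.1
      rw [parts_joinAt_of_none hnone, parts_sever, parts_sever, add_comm]
      exact .head (CutStep.single (.cutL l r)) (ihr.add ihl)

lemma CutsTo.cutSteps {F G : Multiset (PT X)} (h : CutsTo F G) : CutSteps F G := by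
  obtain ⟨Gs, hrel, rfl⟩ := h
  induction hrel with
  | zero => exact .refl
  | cons hg _ ih =>
    obtain ⟨q, hq, rfl⟩ := hg
    simpa [Multiset.singleton_add] using hq.cutSteps.add ih

lemma CutSteps.factor {F G : Multiset (PT X)} (h : CutSteps F G) :
    ∃ Gs, Multiset.Rel (fun t g => CutSteps {t} g) F Gs ∧ G = Gs.sum := by
  induction h using Relation.ReflTransGen.head_induction_on with
  | refl => exact ⟨G.map ({·}), Multiset.rel_map_right.2
      (Multiset.rel_refl_of_refl_on fun _ _ => .refl), by simp⟩
  | head hstep _ ih =>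
    obtain ⟨Gs, hrel, rfl⟩ := ih
    obtain ⟨C, R, s, rest, hce, rfl, rfl⟩ := hstep
    obtain ⟨gR, Gs₁, hR, hrel₁, rfl⟩ := Multiset.rel_cons_left.1 hrel
    obtain ⟨gs, Gs₂, hs, hrel₂, rfl⟩ := Multiset.rel_cons_left.1 hrel₁
    exact ⟨(gR + gs) ::ₘ Gs₂, .cons (.head (CutStep.single hce) (hR.add hs)) hrel₂, by
      simp [add_assoc]⟩

lemma CutSteps.cutsInto {t : PT X} {G : Multiset (PT X)} (h : CutSteps {t} G) :
    CutsInto t G := by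
  induction hn : Multiset.card (labels t) using Nat.strong_induction_on generalizing t G with
  | _ n ih =>
  rcases Relation.ReflTransGen.cases_head h with rfl | ⟨F, hstep, hrest⟩
  · exact ⟨_, .self t, rfl⟩
  obtain ⟨C, R, s, rest, hce, h₁, rfl⟩ := hstep
  obtain ⟨rfl, rfl⟩ := (Multiset.singleton_eq_cons_iff _).1 h₁
  obtain ⟨Gs, hrel, rfl⟩ := CutSteps.factor hrest
  obtain ⟨gR, Gs₁, hR, hrel₁, rfl⟩ := Multiset.rel_cons_left.1 hrel
  obtain ⟨gs, Gs₂, hs, hrel₂, rfl⟩ := Multiset.rel_cons_left.1 hrel₁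
  obtain rfl := Multiset.rel_zero_left.1 hrel₂
  have hcard := congrArg Multiset.card hce.labels_add
  have hR' := Multiset.card_pos.2 (labels_ne_zero R)
  have hs' := Multiset.card_pos.2 (labels_ne_zero s)
  simp only [Multiset.card_add] at hcard
  obtain ⟨qR, hqR, rfl⟩ := ih _ (by omega) hR rfl
  obtain ⟨qs, hqs, rfl⟩ := ih _ (by omega) hs rfl
  exact ⟨_, hce.isCut_detach hqR hqs, by simp⟩

theorem ForestOf.trans [DecidableEq X] {T : PT X} {F G : Multiset (PT X)}
    (hnd : (labels T).Nodup) (hF : ForestOf F {T}) (hG : ForestOf G F) : ForestOf G {T} := by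
  obtain ⟨q, hq, rfl⟩ := cutsTo_singleton.1 hF.cutsTo
  exact (cutsTo_singleton.2 (CutSteps.cutsInto (hq.cutSteps.trans hG.cutsTo.cutSteps))).forestOf
    (by simpa using hnd)

def Fits (R s g : PT X) : Prop := labels g ⊆ labels R ∨ labels g ⊆ labels s

lemma Fits.mono {R s g g' : PT X} (h : Fits R s g') (hg : labels g ⊆ labels g') : Fits R s g :=
  h.imp (Multiset.Subset.trans hg) (Multiset.Subset.trans hg)

lemma Fits.of_nodeAt {σ : Bool} {c c' o s g : PT X} (hd : Disjoint (labels c) (labels o))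
    (hg : labels g ⊆ labels c) (h : Fits (nodeAt σ c' o) s g) : Fits c' s g := by
  refine h.imp_left fun h x hx => ?_
  have := h hx
  simp only [labels_nodeAt, Multiset.mem_add] at this
  exact this.resolve_right (Multiset.disjoint_left.1 hd (hg hx))

def SplitsAlong (R s : PT X) (q : Split X) : Prop :=
  ∃ qR qs, IsCut R qR ∧ IsCut s qs ∧ q.parts = qR.parts + qs.parts ∧
    ∀ a, q.1 = some a → qR.1 = some a ∨ labels a ⊆ labels s

lemma straddles_or_splitsAlong_nodeAt_self {σ : Bool} {c o : PT X}
    (hd : Disjoint (labels c) (labels o)) {q : Split X} (hq : IsCut (nodeAt σ c o) q) :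
    (∃ a, q.1 = some a ∧ ¬ Fits o c a) ∨ SplitsAlong o c q := by
  obtain ⟨p, p', b, b', hp, hp', rfl⟩ := hq.of_nodeAt
  by_cases hboth : ∃ a a', (p.sever b).1 = some a ∧ (p'.sever b').1 = some a'
  · obtain ⟨a, a', hu, hv⟩ := hboth
    refine .inl ⟨nodeAt σ a a', by simp [Split.joinAt, hu, hv], ?_⟩
    have ha := hp.labels_root_subset (sever_fst_eq_some.1 hu).2
    have ha' := hp'.labels_root_subset (sever_fst_eq_some.1 hv).2
    rintro (h | h)
    · exact labels_not_subset_of_disjoint hd ha (fun x hx => h (by simp [hx]))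
    · exact labels_not_subset_of_disjoint hd.symm ha' (fun x hx => h (by simp [hx]))
  · have hnone : (p.sever b).1 = none ∨ (p'.sever b').1 = none := by
      cases hu : (p.sever b).1 <;> cases hv : (p'.sever b').1 <;> simp_all
    refine .inr ⟨p', p, hp', hp, by simp [parts_joinAt_of_none hnone, add_comm], fun a ha => ?_⟩
    rcases hnone with hu | hv
    · simp only [Split.joinAt, hu, Option.merge_none_left, sever_fst_eq_some] at ha
      exact .inl ha.2
    · simp only [Split.joinAt, hv, Option.merge_none_right, sever_fst_eq_some] at ha
      exact .inr (hp.labels_root_subset ha.2)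

section NodeAtCongr

variable {σ : Bool} {c c' s o : PT X}

lemma straddles_of_root_straddles (hd : Disjoint (labels c) (labels o)) {p p' : Split X}
    {b b' : Bool} (hp : IsCut c p)
    (hfit : ∀ g ∈ ((p.sever b).joinAt σ (p'.sever b')).2, Fits (nodeAt σ c' o) s g) {a : PT X}
    (hpa : p.1 = some a) (ha : ¬ Fits c' s a) :
    ∃ a, ((p.sever b).joinAt σ (p'.sever b')).1 = some a ∧ ¬ Fits (nodeAt σ c' o) s a := by
  have hstr : ∀ g, labels a ⊆ labels g → ¬ Fits (nodeAt σ c' o) s g := fun g hag hg =>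
    ha (.of_nodeAt hd (hp.labels_root_subset hpa) (hg.mono hag))
  cases b
  · cases hv : (p'.sever b').1 with
    | none => exact ⟨a, by simp [Split.joinAt, hpa, hv], hstr a fun _ hx => hx⟩
    | some a' => exact ⟨nodeAt σ a a', by simp [Split.joinAt, hpa, hv],
        hstr _ fun x hx => by simp [hx]⟩
  · exact absurd (hfit a (by simp [Split.joinAt, parts, hpa])) (hstr a fun _ hx => hx)

lemma splitsAlong_joinAt_of_root_kept {p p' qc qs : Split X} {b' : Bool} (hp' : IsCut o p')
    (hqc : IsCut c' qc) (hqs : IsCut s qs) (hparts : p.parts = qc.parts + qs.parts) {a : PT X}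
    (hpa : p.1 = some a) (hqa : qc.1 = some a) :
    SplitsAlong (nodeAt σ c' o) s (p.joinAt σ (p'.sever b')) := by
  have hp : p = qc.detach qs.parts :=
    Prod.ext (hpa.trans hqa.symm) (by simpa [parts, hpa, hqa, detach] using hparts)
  refine ⟨qc.joinAt σ (p'.sever b'), qs, isCut_nodeAt false b' hqc hp', hqs, ?_,
    fun a' ha' => .inl ?_⟩
  · rw [hp, joinAt_detach, parts_detach]
  · rwa [hp, joinAt_detach] at ha'

lemma splitsAlong_joinAt_of_root_severed {p p' qc qs : Split X} {b b' : Bool}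
    (hp' : IsCut o p') (hqc : IsCut c' qc) (hqs : IsCut s qs)
    (hparts : p.parts = qc.parts + qs.parts)
    (hnone : (p.sever b).1 = none ∨ (p'.sever b').1 = none)
    (hroot : ∀ a, (p.sever b).1 = some a → labels a ⊆ labels s) :
    SplitsAlong (nodeAt σ c' o) s ((p.sever b).joinAt σ (p'.sever b')) := by
  refine ⟨(qc.sever true).joinAt σ (p'.sever b'), qs, isCut_nodeAt true b' hqc hp', hqs, ?_,
    fun a ha => ?_⟩
  · rw [parts_joinAt_of_none hnone, parts_joinAt_of_none (.inl rfl)]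
    simp only [parts_sever, hparts, add_right_comm]
  · rcases hnone with hu | hv
    · exact .inl (by simpa [Split.joinAt, hu] using ha)
    · simp only [Split.joinAt, hv, Option.merge_none_right] at ha
      exact .inr (hroot a ha)

lemma not_fits_nodeAt (hd : Disjoint (labels c) (labels o))
    (hd' : Disjoint (labels c') (labels s)) (hcs : labels c' + labels s = labels c)
    {a a' : PT X} (ha : labels a ⊆ labels s) (ha' : labels a' ⊆ labels o) :
    ¬ Fits (nodeAt σ c' o) s (nodeAt σ a a') := by
  have hsc : labels s ⊆ labels c := fun x hx => hcs ▸ Multiset.mem_add.2 (.inr hx)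
  rintro (h | h)
  · obtain ⟨x, hx⟩ := exists_mem_labels a
    have hx' : x ∈ labels (nodeAt σ c' o) := h (by simp [hx])
    simp only [labels_nodeAt, Multiset.mem_add] at hx'
    rcases hx' with hx' | hx'
    · exact Multiset.disjoint_left.1 hd' hx' (ha hx)
    · exact Multiset.disjoint_left.1 hd (hsc (ha hx)) hx'
  · exact labels_not_subset_of_disjoint hd.symm ha' fun x hx => hsc (h (by simp [hx]))

lemma straddles_or_splitsAlong_nodeAt_congr (hd : Disjoint (labels c) (labels o))
    (hd' : Disjoint (labels c') (labels s)) (hcs : labels c' + labels s = labels c)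
    (ih : ∀ p, IsCut c p → (∀ g ∈ p.2, Fits c' s g) →
      (∃ a, p.1 = some a ∧ ¬ Fits c' s a) ∨ SplitsAlong c' s p)
    {q : Split X} (hq : IsCut (nodeAt σ c o) q) (hfit : ∀ g ∈ q.2, Fits (nodeAt σ c' o) s g) :
    (∃ a, q.1 = some a ∧ ¬ Fits (nodeAt σ c' o) s a) ∨
      SplitsAlong (nodeAt σ c' o) s q := by
  obtain ⟨p, p', b, b', hp, hp', rfl⟩ := hq.of_nodeAt
  have hfit_p : ∀ g ∈ p.2, Fits c' s g := fun g hg => .of_nodeAt hd (hp.labels_subset hg)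
    (hfit g (by simpa [Split.joinAt] using .inl (Multiset.mem_of_le (snd_le_sever_snd b p) hg)))
  rcases ih p hp hfit_p with ⟨a, hpa, ha⟩ | ⟨qc, qs, hqc, hqs, hparts, hroot⟩
  · exact .inl (straddles_of_root_straddles hd hp hfit hpa ha)
  by_cases keep : ∃ a, (p.sever b).1 = some a ∧ qc.1 = some a
  · obtain ⟨a, hu, hqa⟩ := keep
    obtain ⟨rfl, hpa⟩ := sever_fst_eq_some.1 hu
    exact .inr (splitsAlong_joinAt_of_root_kept hp' hqc hqs hparts hpa hqa)
  have hroot' : ∀ a, (p.sever b).1 = some a → labels a ⊆ labels s := fun a hu =>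
    (hroot a (sever_fst_eq_some.1 hu).2).resolve_left fun h => keep ⟨a, hu, h⟩
  by_cases hnone : (p.sever b).1 = none ∨ (p'.sever b').1 = none
  · exact .inr (splitsAlong_joinAt_of_root_severed hp' hqc hqs hparts hnone hroot')
  obtain ⟨a, hu⟩ := Option.ne_none_iff_exists'.1 (not_or.1 hnone).1
  obtain ⟨a', hv⟩ := Option.ne_none_iff_exists'.1 (not_or.1 hnone).2
  exact .inl ⟨nodeAt σ a a', by simp [Split.joinAt, hu, hv], not_fits_nodeAt hd hd' hcs
    (hroot' a hu) (hp'.labels_root_subset (sever_fst_eq_some.1 hv).2)⟩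

end NodeAtCongr

/-- Only the detached parts are assumed to fit, so that the hypothesis passes to the children;
a root component that does not fit is reported instead. -/
theorem IsCut.straddles_or_splitsAlong {t R s : PT X} (hce : CutEdge t R s)
    (hnd : (labels t).Nodup) {q : Split X} (hq : IsCut t q) (hfit : ∀ g ∈ q.2, Fits R s g) :
    (∃ a, q.1 = some a ∧ ¬ Fits R s a) ∨ SplitsAlong R s q := by
  induction hce generalizing q with
  | cutL l r =>
    exact straddles_or_splitsAlong_nodeAt_self (σ := false) (Multiset.nodup_add.1 hnd).2.2 hq
  | cutR l r =>
    exact straddles_or_splitsAlong_nodeAt_self (σ := true) (Multiset.nodup_add.1 hnd).2.2.symm hq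
  | inL r h ih =>
    obtain ⟨hndl, -, hd⟩ := Multiset.nodup_add.1 hnd
    exact straddles_or_splitsAlong_nodeAt_congr (σ := false) hd
      (Multiset.nodup_add.1 (h.labels_add ▸ hndl)).2.2 h.labels_add (fun _ => ih hndl) hq hfit
  | inR l h ih =>
    obtain ⟨-, hndr, hd⟩ := Multiset.nodup_add.1 hnd
    exact straddles_or_splitsAlong_nodeAt_congr (σ := true) hd.symm
      (Multiset.nodup_add.1 (h.labels_add ▸ hndr)).2.2 h.labels_add (fun _ => ih hndr) hq hfit

lemma CutSteps.refines {F F' : Multiset (PT X)} (h : CutSteps F F') : Refines F' F := by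
  induction h with
  | refl => exact fun g hg => ⟨g, hg, fun _ hx => hx⟩
  | tail _ hstep ih =>
    obtain ⟨C, R, s, rest, hce, rfl, rfl⟩ := hstep
    refine Refines.trans (fun g hg => ?_) ih
    have hRs := hce.labels_add
    rcases Multiset.mem_cons.1 hg with rfl | hg
    · exact ⟨C, by simp, fun x hx => hRs ▸ Multiset.mem_add.2 (.inl hx)⟩
    rcases Multiset.mem_cons.1 hg with rfl | hg
    · exact ⟨C, by simp, fun x hx => hRs ▸ Multiset.mem_add.2 (.inr hx)⟩
    · exact ⟨g, by simp [hg], fun _ hx => hx⟩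

lemma CutsTo.of_cutStep {F F' G : Multiset (PT X)} (hnd : (labelsF F).Nodup)
    (hstep : CutStep F F') (h : CutsTo F G) (href : Refines G F') : CutsTo F' G := by
  obtain ⟨C, R, s, rest, hce, rfl, rfl⟩ := hstep
  obtain ⟨Gs, hrel, rfl⟩ := h
  obtain ⟨_, Gs, ⟨q, hq, rfl⟩, hrest, rfl⟩ := Multiset.rel_cons_left.1 hrel
  obtain ⟨hndC, -, hd⟩ := Multiset.nodup_add.1 (labelsF_cons C rest ▸ hnd)
  have hfit : ∀ g ∈ q.parts, Fits R s g := fun g hg => by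
    obtain ⟨D, hD, hgD⟩ := href g (by simp [hg])
    rcases Multiset.mem_cons.1 hD with rfl | hD
    · exact .inl hgD
    rcases Multiset.mem_cons.1 hD with rfl | hD
    · exact .inr hgD
    · exact absurd (Multiset.Subset.trans hgD (Multiset.subset_of_le (labels_le_labelsF hD)))
        (labels_not_subset_of_disjoint hd (Multiset.subset_of_le (hq.labels_le hg)))
  rcases hq.straddles_or_splitsAlong hce hndC fun g hg => hfit g (by simp [parts, hg]) with
    ⟨a, ha, hna⟩ | ⟨qR, qs, hR, hs, hparts, -⟩
  · exact absurd (hfit a (by simp [parts, ha])) hna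
  · exact ⟨qR.parts ::ₘ qs.parts ::ₘ Gs,
      .cons ⟨qR, hR, rfl⟩ (.cons ⟨qs, hs, rfl⟩ hrest),
      by simp [hparts, add_assoc]⟩

lemma CutsTo.of_cutSteps {F F' G : Multiset (PT X)} (h : CutSteps F F')
    (hnd : (labelsF F).Nodup) (hG : CutsTo F G) (href : Refines G F') : CutsTo F' G := by
  induction h using Relation.ReflTransGen.head_induction_on with
  | refl => exact hG
  | head hstep hrest ih =>
    exact ih (hstep.labelsF_eq ▸ hnd)
      (hG.of_cutStep hnd hstep (href.trans (CutSteps.refines hrest)))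

theorem ForestOf.of_refines [DecidableEq X] {T : PT X} {F G : Multiset (PT X)}
    (hnd : (labels T).Nodup) (hF : ForestOf F {T}) (hG : ForestOf G {T}) (href : Refines G F) :
    ForestOf G F := by
  obtain ⟨q, hq, rfl⟩ := cutsTo_singleton.1 hF.cutsTo
  exact (CutsTo.of_cutSteps hq.cutSteps (by simpa using hnd) hG.cutsTo href).forestOf
    (hq.labelsF_parts ▸ hnd)

theorem forest_ecut_general {X : Type} [DecidableEq X] (T₁ T₂ : PT X)
    (hnd₁ : (labels T₁).Nodup) (hnd₂ : (labels T₂).Nodup)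
    (k : ℕ) (Td : Fin k → PT X) (Fd : Fin k → Multiset (PT X))
    (F₁ F₂ : Multiset (PT X))
    (hF₁def : F₁ = ∑ i : Fin k, ({Td i} : Multiset (PT X)))
    (hF₂def : F₂ = ∑ i : Fin k, Fd i)
    (hlab : ∀ i, labelsF (Fd i) = labels (Td i))
    (hF₁ : ForestOf F₁ {T₁}) (hF₂ : ForestOf F₂ {T₂}) :
    ∀ G : Multiset (PT X), ForestOf G F₂ →
      (IsAF G T₁ T₂ ↔ (ForestOf G F₁ ∧ ForestOf G F₂)) := by
  intro G hG
  have hF₂F₁ : Refines F₂ F₁ := fun D hD => by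
    obtain ⟨i, -, hi⟩ := Multiset.mem_sum.1 (hF₂def ▸ hD)
    refine ⟨Td i, hF₁def ▸ Multiset.mem_sum.2 ⟨i, Finset.mem_univ i, by simp⟩, ?_⟩
    exact hlab i ▸ Multiset.subset_of_le (labels_le_labelsF hi)
  constructor
  · rintro ⟨h₁, -⟩
    exact ⟨.of_refines hnd₁ hF₁ h₁ (hG.cutsTo.refines.trans hF₂F₁), hG⟩
  · rintro ⟨h₁, h₂⟩
    exact ⟨hF₁.trans hnd₁ h₁, hF₂.trans hnd₂ h₂⟩

/-- Let `F₁` be the union of trees `Ṫ₁, …, Ṫ_k` and `F₂` the union of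
forests `Ḟ₁, …, Ḟ_k` such that `Ṫ_i` and `Ḟ_i` have the same label set for
each `i`.  Then a forest of `F₂` is an agreement forest of `T₁` and `T₂`
if and only if it is an agreement forest of `F₁` and `F₂`. -/
theorem forest_ecut {X : Type} [DecidableEq X] (T₁ T₂ : PT X)
    (hnd₁ : (labels T₁).Nodup) (hnd₂ : (labels T₂).Nodup)
    (hX : labs T₁ = labs T₂)
    (k : ℕ) (Td : Fin k → PT X) (Fd : Fin k → Multiset (PT X))
    (F₁ F₂ : Multiset (PT X))
    (hF₁def : F₁ = ∑ i : Fin k, ({Td i} : Multiset (PT X)))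
    (hF₂def : F₂ = ∑ i : Fin k, Fd i)
    (hlab : ∀ i, labelsF (Fd i) = labels (Td i))
    (hF₁ : ForestOf F₁ {T₁}) (hF₂ : ForestOf F₂ {T₂}) :
    ∀ G : Multiset (PT X), ForestOf G F₂ →
      (IsAF G T₁ T₂ ↔ (ForestOf G F₁ ∧ ForestOf G F₂)) :=
  forest_ecut_general T₁ T₂ hnd₁ hnd₂ k Td Fd F₁ F₂ hF₁def hF₂def hlab hF₁ hF₂

end Phylo
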